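/- If LR(y₁) = LR(y₂), then the channel Q obtained by the degrading merge of y₁ and y₂ (summing their probabilities into one symbol pair) is equivalent to W: Q is both degraded and upgraded with respect to W. -/

import Mathlib

open scoped BigOperators

/-- `P : A → B → ℝ` is a channel: nonnegative entries, rows sum to 1. -/
def IsChannel {A B : Type*} [Fintype B] (P : A → B → ℝ) : Prop :=
  (∀ a b, 0 ≤ P a b) ∧ ∀ a, ∑ b, P a b = 1

/-- `Q` is degraded with respect to `W`. -/
def DegradedWrt {A B : Type*} [Fintype A] [Fintype B]
    (Q : Bool → B → ℝ) (W : Bool → A → ℝ) : Prop :=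
  ∃ P : A → B → ℝ, IsChannel P ∧ ∀ x b, Q x b = ∑ a, W x a * P a b

/-!
Merging is a deterministic post-processing of the output, so the merged channel `Q` is degraded
with respect to `W`. Conversely, equal likelihood ratios give a common ratio
`α = W(y₁|x) / (W(y₁|x) + W(y₂|x))`, the same for both inputs (for `x = 1` by symmetry of `W`).
Hence `W` is recovered from `Q` by sending `z` to `y₁` with probability `α` and to `y₂` with
probability `1 - α`, and likewise `z̄` to `ȳ₁` and `ȳ₂`.
-/

section Degradation

variable {A B : Type*} [Fintype A] [DecidableEq B]

theorem degradedWrt_of_pushforward [Fintype B] {Q : Bool → B → ℝ} {W : Bool → A → ℝ}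
    (f : A → B) (hQ : ∀ x b, Q x b = ∑ a with f a = b, W x a) : DegradedWrt Q W := by
  refine ⟨fun a b => if f a = b then 1 else 0, ⟨fun a b => by positivity, fun a => ?_⟩,
    fun x b => ?_⟩
  · simp
  · simp [hQ, Finset.sum_filter]

theorem degradedWrt_of_split [Fintype B] {Q : Bool → B → ℝ} {W : Bool → A → ℝ} (f : A → B)
    (w : A → ℝ) (hw_nonneg : ∀ a, 0 ≤ w a) (hw_sum : ∀ b, ∑ a with f a = b, w a = 1)
    (hW : ∀ x a, W x a = w a * Q x (f a)) : DegradedWrt W Q := by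
  refine ⟨fun b a => if f a = b then w a else 0,
    ⟨fun b a => ite_nonneg (hw_nonneg a) le_rfl, fun b => ?_⟩, fun x a => ?_⟩
  · rw [← Finset.sum_filter, hw_sum]
  · simp [hW x a, mul_comm]

theorem sum_fiber_eq_of_split {Q : Bool → B → ℝ} {W : Bool → A → ℝ} (f : A → B) (w : A → ℝ)
    (hw_sum : ∀ b, ∑ a with f a = b, w a = 1) (hW : ∀ x a, W x a = w a * Q x (f a)) (x : Bool)
    (b : B) : Q x b = ∑ a with f a = b, W x a := by
  rw [Finset.sum_congr rfl fun a ha => by rw [hW, (Finset.mem_filter.1 ha).2],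
    ← Finset.sum_mul, hw_sum, one_mul]

end Degradation

theorem exists_common_ratio_of_mul_eq_mul {a b a' b' : ℝ} (ha : 0 ≤ a) (hb : 0 ≤ b)
    (ha' : 0 ≤ a') (hb' : 0 ≤ b') (h : a * b' = b * a') :
    ∃ α : ℝ, 0 ≤ α ∧ α ≤ 1 ∧ a = α * (a + b) ∧ a' = α * (a' + b') := by
  rcases (by positivity : 0 ≤ a + b + a' + b').eq_or_lt with hs | hs
  · exact ⟨0, le_rfl, zero_le_one, by linarith, by linarith⟩
  -- pooling both pairs gives one formula for `α`, valid even if `a + b = 0` or `a' + b' = 0`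
  · refine ⟨(a + a') / (a + b + a' + b'), by positivity, (div_le_one hs).2 (by linarith), ?_, ?_⟩
    · field_simp
      linear_combination h
    · field_simp
      linear_combination -h

theorem ne_of_nodup_four {α : Type*} {a b c d : α} (h : [a, b, c, d].Nodup) :
    a ≠ b ∧ a ≠ c ∧ a ≠ d ∧ b ≠ c ∧ b ≠ d ∧ c ≠ d := by
  simp only [List.nodup_cons, List.mem_cons, List.not_mem_nil, not_or, or_false] at h
  tauto

section Merge

variable {Y : Type*} [DecidableEq Y] (c : Y → Y) (y₁ y₂ : Y)

abbrev Unmerged := {y : Y // y ≠ y₁ ∧ y ≠ c y₁ ∧ y ≠ y₂ ∧ y ≠ c y₂}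

/-- `inr false` is the merged symbol `z` and `inr true` its conjugate `z̄`. -/
def mergeMap (y : Y) : Unmerged c y₁ y₂ ⊕ Bool :=
  if h : y ≠ y₁ ∧ y ≠ c y₁ ∧ y ≠ y₂ ∧ y ≠ c y₂ then .inl ⟨y, h⟩ else .inr (y = c y₁ ∨ y = c y₂)

def mergeChannel (W : Bool → Y → ℝ) : Bool → Unmerged c y₁ y₂ ⊕ Bool → ℝ :=
  fun x s => Sum.elim (fun w : Unmerged c y₁ y₂ => W x (w : Y))
    (fun b : Bool => if b then W x (c y₁) + W x (c y₂) else W x y₁ + W x y₂) s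

def mergeWeight (α : ℝ) (y : Y) : ℝ :=
  if y = y₁ ∨ y = c y₁ then α else if y = y₂ ∨ y = c y₂ then 1 - α else 1

variable {c y₁ y₂}

theorem mergeMap_eq_inl_iff {y : Y} {w : Unmerged c y₁ y₂} :
    mergeMap c y₁ y₂ y = .inl w ↔ y = w := by
  unfold mergeMap
  split_ifs with h
  · simp [Subtype.ext_iff]
  · simp only [false_iff]
    rintro rfl
    exact h w.2

theorem mergeMap_eq_inr_false_iff (hdist : [y₁, c y₁, y₂, c y₂].Nodup) {y : Y} :
    mergeMap c y₁ y₂ y = .inr false ↔ y = y₁ ∨ y = y₂ := by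
  obtain ⟨h₁₁', h₁₂, h₁₂', h₁'₂, h₁'₂', h₂₂'⟩ := ne_of_nodup_four hdist
  unfold mergeMap
  split_ifs with h
  · simp only [false_iff]
    tauto
  · simp only [Sum.inr.injEq, decide_eq_false_iff_not]
    refine ⟨fun _ => by tauto, ?_⟩
    rintro (rfl | rfl) <;> tauto

theorem mergeMap_eq_inr_true_iff {y : Y} :
    mergeMap c y₁ y₂ y = .inr true ↔ y = c y₁ ∨ y = c y₂ := by
  unfold mergeMap
  split_ifs with h
  · simp only [false_iff]
    tauto
  · simp

theorem mergeWeight_nonneg {α : ℝ} (hα₀ : 0 ≤ α) (hα₁ : α ≤ 1) (y : Y) :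
    0 ≤ mergeWeight c y₁ y₂ α y := by
  unfold mergeWeight
  split_ifs <;> linarith

theorem eq_mergeWeight_mul_mergeChannel (hdist : [y₁, c y₁, y₂, c y₂].Nodup)
    {W : Bool → Y → ℝ} {α : ℝ} (hα : ∀ x, W x y₁ = α * (W x y₁ + W x y₂))
    (hα' : ∀ x, W x (c y₁) = α * (W x (c y₁) + W x (c y₂))) (x : Bool) (y : Y) :
    W x y = mergeWeight c y₁ y₂ α y * mergeChannel c y₁ y₂ W x (mergeMap c y₁ y₂ y) := by
  obtain ⟨-, h₁₂, h₁₂', h₁'₂, h₁'₂', -⟩ := ne_of_nodup_four hdist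
  by_cases h : y ≠ y₁ ∧ y ≠ c y₁ ∧ y ≠ y₂ ∧ y ≠ c y₂
  · simp [mergeMap, h, mergeWeight, mergeChannel]
  obtain rfl | rfl | rfl | rfl : y = y₁ ∨ y = c y₁ ∨ y = y₂ ∨ y = c y₂ := by tauto
  · rw [(mergeMap_eq_inr_false_iff hdist).2 (.inl rfl)]
    simpa [mergeWeight, mergeChannel] using hα x
  · rw [mergeMap_eq_inr_true_iff.2 (.inl rfl)]
    simpa [mergeWeight, mergeChannel] using hα' x
  · rw [(mergeMap_eq_inr_false_iff hdist).2 (.inr rfl)]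
    simp [mergeWeight, mergeChannel, h₁₂.symm, h₁'₂.symm]
    linarith [hα x]
  · rw [mergeMap_eq_inr_true_iff.2 (.inr rfl)]
    simp [mergeWeight, mergeChannel, h₁₂'.symm, h₁'₂'.symm]
    linarith [hα' x]

variable [Fintype Y]

theorem sum_mergeWeight_fiber (hdist : [y₁, c y₁, y₂, c y₂].Nodup) (α : ℝ)
    (b : Unmerged c y₁ y₂ ⊕ Bool) :
    ∑ y with mergeMap c y₁ y₂ y = b, mergeWeight c y₁ y₂ α y = 1 := by
  obtain ⟨h₁₁', h₁₂, h₁₂', h₁'₂, h₁'₂', h₂₂'⟩ := ne_of_nodup_four hdist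
  rcases b with ⟨w, hw₁, hw₁', hw₂, hw₂'⟩ | _ | _
  · simp [mergeMap_eq_inl_iff, Finset.filter_eq', mergeWeight, *]
  · simp [mergeMap_eq_inr_false_iff hdist, Finset.filter_or, Finset.filter_eq',
      mergeWeight, *, h₁₂.symm, h₁'₂.symm]
  · simp [mergeMap_eq_inr_true_iff, Finset.filter_or, Finset.filter_eq',
      mergeWeight, *, h₁₂'.symm, h₁'₂'.symm]

end Merge

theorem merge_equal_LR_equivalent {Y : Type*} [Fintype Y] [DecidableEq Y]
    (W : Bool → Y → ℝ) (hW : IsChannel W)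
    (c : Y → Y) (hc : Function.Involutive c)
    (hsym : ∀ y, W true y = W false (c y))
    (y₁ y₂ : Y) (hdist : [y₁, c y₁, y₂, c y₂].Nodup)
    (hLR : W false y₁ * W false (c y₂) = W false y₂ * W false (c y₁)) :
    DegradedWrt
      ((fun x s =>
          Sum.elim (fun w : {y : Y // y ≠ y₁ ∧ y ≠ c y₁ ∧ y ≠ y₂ ∧ y ≠ c y₂} => W x (w : Y))
            (fun b : Bool =>
              if b then W x (c y₁) + W x (c y₂) else W x y₁ + W x y₂) s) :
        Bool → ({y : Y // y ≠ y₁ ∧ y ≠ c y₁ ∧ y ≠ y₂ ∧ y ≠ c y₂} ⊕ Bool) → ℝ)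
      W ∧
    DegradedWrt W
      ((fun x s =>
          Sum.elim (fun w : {y : Y // y ≠ y₁ ∧ y ≠ c y₁ ∧ y ≠ y₂ ∧ y ≠ c y₂} => W x (w : Y))
            (fun b : Bool =>
              if b then W x (c y₁) + W x (c y₂) else W x y₁ + W x y₂) s) :
        Bool → ({y : Y // y ≠ y₁ ∧ y ≠ c y₁ ∧ y ≠ y₂ ∧ y ≠ c y₂} ⊕ Bool) → ℝ) := by
  obtain ⟨α, hα₀, hα₁, hα, hα'⟩ := exists_common_ratio_of_mul_eq_mul (hW.1 _ y₁) (hW.1 _ y₂)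
    (hW.1 _ (c y₁)) (hW.1 _ (c y₂)) hLR
  have hsym' : W true (c y₁) = W false y₁ ∧ W true (c y₂) = W false y₂ := by
    simp only [hsym, hc _, and_self]
  have hsplit := eq_mergeWeight_mul_mergeChannel hdist
    (Bool.forall_bool.2 ⟨hα, by simpa only [hsym] using hα'⟩)
    (Bool.forall_bool.2 ⟨hα', by simpa only [hsym'] using hα⟩)
  have hfiber := sum_mergeWeight_fiber hdist α
  exact ⟨degradedWrt_of_pushforward _ (sum_fiber_eq_of_split _ _ hfiber hsplit),
    degradedWrt_of_split _ _ (mergeWeight_nonneg hα₀ hα₁) hfiber hsplit⟩
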